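/- arXiv:1812.10866 — 2 statements merged into one kernel-verified Lean document; each statement's English description precedes it below -/
import Mathlib

section
/- Let n ≥ 4 be an integer. For every ε > 0 there is a constant C = C(ε, n) > 0 with the following property. For any pseudometric space (X, d), any points x, x₁, y ∈ X, and any radii R > 0 and R₁ with R/2 ≤ R₁ ≤ 3R/2, if d(x, x₁) ≤ R then R₁^{4−n} · exp( − d(x,y)² / (4 R₁²) ) ≤ C · R^{4−n} · exp( − d(x₁,y)² / (4 R²) ) + ε · (2R)^{4−n} · exp( − d(x₁,y)² / (16 R²) ). -/
private lemma gaussian_comparison_aux (a b R R₁ Q : ℝ) (hR : 0 < R) (hR1pos : 0 < R₁)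
    (hR1u : R₁ ≤ 3 * R / 2) (ha : 0 ≤ a) (hb : 0 ≤ b) (haLB : 7 / 8 * b ≤ a)
    (hbQ : Q * R ≤ b) (hQpos : 0 < Q) :
    -a ^ 2 / (4 * R₁ ^ 2) ≤ -(13 / 576) * Q ^ 2 + -b ^ 2 / (16 * R ^ 2) := by
  have hab : 49 / 64 * b ^ 2 ≤ a ^ 2 := by nlinarith
  have hR1sq : R₁ ^ 2 ≤ 9 / 4 * R ^ 2 := by nlinarith
  have hbQ2 : Q ^ 2 * R ^ 2 ≤ b ^ 2 := by nlinarith [mul_le_mul hbQ hbQ (by positivity) hb]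
  have e1 : 49 / 576 * b ^ 2 / R ^ 2 ≤ a ^ 2 / (4 * R₁ ^ 2) := by
    rw [div_le_div_iff₀ (by positivity) (by positivity)]
    nlinarith [mul_le_mul_of_nonneg_right hab (sq_nonneg R),
      mul_le_mul_of_nonneg_left hR1sq (by positivity : (0 : ℝ) ≤ 49 / 576 * b ^ 2)]
  have e2 : 13 / 576 * Q ^ 2 ≤ 13 / 576 * b ^ 2 / R ^ 2 := by
    rw [le_div_iff₀ (by positivity)]
    nlinarith
  have e3 : 49 / 576 * b ^ 2 / R ^ 2 =
      13 / 576 * b ^ 2 / R ^ 2 + b ^ 2 / (16 * R ^ 2) := by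
    field_simp; ring
  have e4 : -a ^ 2 / (4 * R₁ ^ 2) = -(a ^ 2 / (4 * R₁ ^ 2)) := neg_div _ _
  have e5 : -b ^ 2 / (16 * R ^ 2) = -(b ^ 2 / (16 * R ^ 2)) := neg_div _ _
  rw [e4, e5]
  linarith

/-- Pointwise Gaussian comparison (cf. Struwe): for `n ≥ 4` and every `ε > 0` there is a
constant `C = C(ε, n) > 0` such that in any pseudometric space, whenever `R > 0`,
`R/2 ≤ R₁ ≤ 3R/2`, and `d(x, x₁) ≤ R`, the Gaussian weight centered at `x` at scale `R₁`
is dominated by `C` times the weight centered at `x₁` at scale `R` plus `ε` times the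
weight centered at `x₁` at the doubled scale `2R`. -/
theorem gaussian_comparison_pointwise (n : ℕ) (hn : 4 ≤ n) :
    ∀ ε > (0 : ℝ), ∃ C > (0 : ℝ),
      ∀ (X : Type) (_ : PseudoMetricSpace X) (x x₁ y : X) (R R₁ : ℝ),
        0 < R → R / 2 ≤ R₁ → R₁ ≤ 3 * R / 2 → dist x x₁ ≤ R →
        R₁ ^ ((4 : ℤ) - (n : ℤ)) * Real.exp (-(dist x y) ^ 2 / (4 * R₁ ^ 2)) ≤
          C * R ^ ((4 : ℤ) - (n : ℤ)) * Real.exp (-(dist x₁ y) ^ 2 / (4 * R ^ 2)) +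
            ε * (2 * R) ^ ((4 : ℤ) - (n : ℤ)) *
              Real.exp (-(dist x₁ y) ^ 2 / (16 * R ^ 2)) := by
  intro ε hε
  set t : ℝ := Real.log (ε / 4 ^ n) with ht_def
  set Q : ℝ := max 8 (Real.sqrt (576 / 13 * (-t))) with hQ_def
  have hQ8 : (8 : ℝ) ≤ Q := le_max_left _ _
  have hQpos : (0 : ℝ) < Q := by linarith
  have hQkey : (4 : ℝ) ^ n * Real.exp (-(13 / 576) * Q ^ 2) ≤ ε := by
    have h4 : (0 : ℝ) < 4 ^ n := by positivity
    have hkey : -(13 / 576) * Q ^ 2 ≤ t := by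
      rcases le_or_gt t 0 with h | h
      · have harg : 0 ≤ 576 / 13 * (-t) := by nlinarith
        have hsq : Real.sqrt (576 / 13 * (-t)) ^ 2 = 576 / 13 * (-t) := Real.sq_sqrt harg
        have hQge : Real.sqrt (576 / 13 * (-t)) ≤ Q := le_max_right _ _
        have hsqrtnn : 0 ≤ Real.sqrt (576 / 13 * (-t)) := Real.sqrt_nonneg _
        nlinarith [sq_nonneg Q]
      · nlinarith [sq_nonneg Q]
    have := Real.exp_le_exp.2 hkey
    rw [ht_def, Real.exp_log (div_pos hε h4)] at this
    calc (4 : ℝ) ^ n * Real.exp (-(13 / 576) * Q ^ 2) ≤ 4 ^ n * (ε / 4 ^ n) := by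
          exact mul_le_mul_of_nonneg_left this (le_of_lt h4)
      _ = ε := by field_simp
  refine ⟨2 ^ n * Real.exp (Q ^ 2 / 4), by positivity, ?_⟩
  intro X _ x x₁ y R R₁ hR hR1l hR1u hd
  clear_value t Q
  clear ht_def hQ_def
  obtain ⟨m, hm⟩ : ∃ m : ℕ, n = m + 4 := ⟨n - 4, by omega⟩
  subst hm
  have hexp : ((4 : ℤ) - ((m + 4 : ℕ) : ℤ)) = -(m : ℤ) := by push_cast; ring
  rw [hexp]
  have hR1pos : 0 < R₁ := by linarith
  simp only [zpow_neg, zpow_natCast]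
  set a := dist x y with ha_def
  set b := dist x₁ y with hb_def
  have ha : 0 ≤ a := dist_nonneg
  have hb : 0 ≤ b := dist_nonneg
  have htri : b ≤ R + a := by
    calc b ≤ dist x₁ x + dist x y := dist_triangle _ _ _
      _ = dist x x₁ + a := by rw [dist_comm]
      _ ≤ R + a := by linarith
  have hRm : (0 : ℝ) < R ^ m := by positivity
  have hR1m : (0 : ℝ) < R₁ ^ m := by positivity
  have h2Rm : (0 : ℝ) < (2 * R) ^ m := by positivity
  -- power bounds
  have hpow1 : (R₁ ^ m)⁻¹ ≤ 2 ^ m * (R ^ m)⁻¹ := by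
    have h : R ^ m ≤ (2 * R₁) ^ m := pow_le_pow_left₀ hR.le (by linarith) m
    calc (R₁ ^ m)⁻¹ = 2 ^ m * ((2 * R₁) ^ m)⁻¹ := by
          rw [mul_pow]; field_simp
      _ ≤ 2 ^ m * (R ^ m)⁻¹ := by gcongr
  have hpow2 : (R ^ m)⁻¹ = 2 ^ m * ((2 * R) ^ m)⁻¹ := by
    rw [mul_pow]; field_simp
  by_cases hcase : b ≤ Q * R
  · -- near region: first term dominates
    have h1 : Real.exp (-a ^ 2 / (4 * R₁ ^ 2)) ≤ 1 := by
      rw [Real.exp_le_one_iff]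
      apply div_nonpos_of_nonpos_of_nonneg
      · simp [sq_nonneg a]
      · positivity
    have h2 : Real.exp (-(Q ^ 2 / 4)) ≤ Real.exp (-b ^ 2 / (4 * R ^ 2)) := by
      apply Real.exp_le_exp.2
      have hstep : b ^ 2 / (4 * R ^ 2) ≤ Q ^ 2 / 4 := by
        rw [div_le_div_iff₀ (by positivity) (by norm_num)]
        nlinarith [pow_le_pow_left₀ hb hcase 2]
      rw [neg_div]
      exact neg_le_neg hstep
    have hmain : (R₁ ^ m)⁻¹ * Real.exp (-a ^ 2 / (4 * R₁ ^ 2)) ≤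
        2 ^ (m + 4) * Real.exp (Q ^ 2 / 4) * (R ^ m)⁻¹ *
          Real.exp (-b ^ 2 / (4 * R ^ 2)) := by
      calc (R₁ ^ m)⁻¹ * Real.exp (-a ^ 2 / (4 * R₁ ^ 2))
          ≤ (2 ^ m * (R ^ m)⁻¹) * 1 := by
            apply mul_le_mul hpow1 h1 (Real.exp_pos _).le (by positivity)
        _ = 2 ^ m * (R ^ m)⁻¹ := by ring
        _ ≤ 2 ^ (m + 4) * (R ^ m)⁻¹ := by
            have : (2 : ℝ) ^ m ≤ 2 ^ (m + 4) :=
              pow_le_pow_right₀ (by norm_num) (by omega)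
            gcongr
        _ = 2 ^ (m + 4) * Real.exp (Q ^ 2 / 4) * (R ^ m)⁻¹ *
              Real.exp (-(Q ^ 2 / 4)) := by
            have hE : Real.exp (Q ^ 2 / 4) * Real.exp (-(Q ^ 2 / 4)) = 1 := by
              rw [← Real.exp_add]; simp
            have hre : 2 ^ (m + 4) * Real.exp (Q ^ 2 / 4) * (R ^ m)⁻¹ *
                Real.exp (-(Q ^ 2 / 4)) = 2 ^ (m + 4) * (R ^ m)⁻¹ *
                (Real.exp (Q ^ 2 / 4) * Real.exp (-(Q ^ 2 / 4))) := by ring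
            rw [hre, hE, mul_one]
        _ ≤ 2 ^ (m + 4) * Real.exp (Q ^ 2 / 4) * (R ^ m)⁻¹ *
              Real.exp (-b ^ 2 / (4 * R ^ 2)) := by gcongr
    have hnn : 0 ≤ ε * ((2 * R) ^ m)⁻¹ * Real.exp (-b ^ 2 / (16 * R ^ 2)) := by
      positivity
    calc (R₁ ^ m)⁻¹ * Real.exp (-a ^ 2 / (4 * R₁ ^ 2))
        ≤ 2 ^ (m + 4) * Real.exp (Q ^ 2 / 4) * (R ^ m)⁻¹ *
            Real.exp (-b ^ 2 / (4 * R ^ 2)) := hmain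
      _ ≤ _ := le_add_of_nonneg_right hnn
  · -- far region: second term dominates
    push_neg at hcase
    have hbQ : Q * R ≤ b := hcase.le
    have hb8 : 8 * R ≤ b := le_trans (mul_le_mul_of_nonneg_right hQ8 hR.le) hbQ
    have haLB : 7 / 8 * b ≤ a := by linarith
    have hexp1 : Real.exp (-a ^ 2 / (4 * R₁ ^ 2)) ≤
        Real.exp (-(13 / 576) * Q ^ 2) * Real.exp (-b ^ 2 / (16 * R ^ 2)) := by
      rw [← Real.exp_add]
      apply Real.exp_le_exp.2
      exact gaussian_comparison_aux a b R R₁ Q hR hR1pos hR1u ha hb haLB hbQ hQpos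
    have hpow3 : (R₁ ^ m)⁻¹ ≤ 4 ^ m * ((2 * R) ^ m)⁻¹ := by
      calc (R₁ ^ m)⁻¹ ≤ 2 ^ m * (R ^ m)⁻¹ := hpow1
        _ = 2 ^ m * (2 ^ m * ((2 * R) ^ m)⁻¹) := by rw [hpow2]
        _ = 4 ^ m * ((2 * R) ^ m)⁻¹ := by
            rw [← mul_assoc, ← mul_pow]; norm_num
    have h4key : (4 : ℝ) ^ m * Real.exp (-(13 / 576) * Q ^ 2) ≤ ε := by
      have h4le : (4 : ℝ) ^ m ≤ 4 ^ (m + 4) :=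
        pow_le_pow_right₀ (by norm_num) (by omega)
      calc (4 : ℝ) ^ m * Real.exp (-(13 / 576) * Q ^ 2)
          ≤ 4 ^ (m + 4) * Real.exp (-(13 / 576) * Q ^ 2) := by
            exact mul_le_mul_of_nonneg_right h4le (Real.exp_pos _).le
        _ ≤ ε := hQkey
    calc (R₁ ^ m)⁻¹ * Real.exp (-a ^ 2 / (4 * R₁ ^ 2))
        ≤ (4 ^ m * ((2 * R) ^ m)⁻¹) *
            (Real.exp (-(13 / 576) * Q ^ 2) * Real.exp (-b ^ 2 / (16 * R ^ 2))) :=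
          mul_le_mul hpow3 hexp1 (Real.exp_pos _).le (by positivity)
      _ = (4 ^ m * Real.exp (-(13 / 576) * Q ^ 2)) * ((2 * R) ^ m)⁻¹ *
            Real.exp (-b ^ 2 / (16 * R ^ 2)) := by ring
      _ ≤ ε * ((2 * R) ^ m)⁻¹ * Real.exp (-b ^ 2 / (16 * R ^ 2)) := by
          gcongr
      _ ≤ _ := le_add_of_nonneg_left (by positivity)
end

section
/- Let n ≥ 4 be an integer, let (X, d) be a pseudometric space equipped with a measure μ, and let w : X → [0,∞] be a measurable function. For R > 0 and x ∈ X define the weighted energy Φ(R, x) = R^{4−n} (4π)^{−n/2} ∫_X w(y) · exp( − d(x,y)² / (4R²) ) dμ(y). Then for every ε > 0 there is a constant C = C(ε, n) > 0 such that whenever R > 0, R/2 ≤ R₁ ≤ 3R/2, and d(x, x₁) ≤ R, one has Φ(R₁, x) ≤ C · Φ(R, x₁) + ε · Φ(2R, x₁). -/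
open MeasureTheory

/-- The weighted energy `Φ(R, x) = R^{4−n} (4π)^{−n/2} ∫ w(y) exp(−d(x,y)²/(4R²)) dμ(y)`
of a nonnegative density `w` on a pseudometric measure space. -/
noncomputable def weightedEnergy (n : ℕ) {X : Type} [PseudoMetricSpace X]
    [MeasurableSpace X] (μ : Measure X) (w : X → ENNReal) (R : ℝ) (x : X) : ENNReal :=
  ENNReal.ofReal (R ^ ((4 : ℤ) - (n : ℤ)) * (4 * Real.pi) ^ (-(n : ℝ) / 2)) *
    ∫⁻ y, w y * ENNReal.ofReal (Real.exp (-(dist x y) ^ 2 / (4 * R ^ 2))) ∂μ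

/-!
With `s = d(x₁, y) / R`, the triangle inequality gives `d(x, y) ≥ (s - 1) R`, and `R₁ ≤ 3R/2`
turns the kernel of scale `R₁` at `x` into at most a constant times `R^{4-n} exp(-(s - 1)₊² / 9)`.
Since `(s - 1)² / 9 - s² / 16 → ∞`, for large `s` this is absorbed by `ε` times the kernel of
scale `2R` at `x₁`, and for bounded `s` by a large multiple of the kernel of scale `R` at `x₁`.

Integrating this pointwise bound against `w` needs care, since nothing makes the kernels measurable
(`X` carries an arbitrary σ-algebra) and the lower Lebesgue integral is not additive in general.
It is additive on pairs of functions that vary together, as the two kernels centred at `x₁` do.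
-/

open Filter Real Set
open scoped ENNReal

namespace MeasureTheory

variable {α : Type*} [MeasurableSpace α] {μ : Measure α} {w f g k : α → ℝ≥0∞}

/-- On each level set of a simple function below `f + g`, the infima of `f` and of `g` add up to
at least its value, because `f` and `g` vary together; so it splits into simple functions below
`f` and below `g`. -/
theorem lintegral_add_of_monovary (h : Monovary f g) :
    ∫⁻ a, f a + g a ∂μ = ∫⁻ a, f a ∂μ + ∫⁻ a, g a ∂μ := by
  refine le_antisymm ?_ (le_lintegral_add f g)
  rw [lintegral]
  refine iSup₂_le fun φ hφ => ?_
  let F : ℝ≥0∞ → ℝ≥0∞ := fun c => ⨅ z : {z // φ z = c}, f z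
  let G : ℝ≥0∞ → ℝ≥0∞ := fun c => ⨅ z : {z // φ z = c}, g z
  have hF : ⇑(φ.map F) ≤ f := fun a => iInf_le (fun z : {z // φ z = φ a} => f z) ⟨a, rfl⟩
  have hG : ⇑(φ.map G) ≤ g := fun a => iInf_le (fun z : {z // φ z = φ a} => g z) ⟨a, rfl⟩
  have hsplit : ⇑φ ≤ ⇑(φ.map F + φ.map G) := fun a => by
    have key : ∀ z₁, φ z₁ = φ a → ∀ z₂, φ z₂ = φ a → φ a ≤ f z₁ + g z₂ := by
      intro z₁ h₁ z₂ h₂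
      rcases le_or_gt (g z₁) (g z₂) with hg | hg
      · calc φ a = φ z₁ := h₁.symm
          _ ≤ f z₁ + g z₁ := hφ z₁
          _ ≤ f z₁ + g z₂ := by gcongr
      · calc φ a = φ z₂ := h₂.symm
          _ ≤ f z₂ + g z₂ := hφ z₂
          _ ≤ f z₁ + g z₂ := by gcongr; exact h hg
    simpa [F, G, ENNReal.iInf_add, ENNReal.add_iInf] using fun z₂ h₂ z₁ h₁ => key z₁ h₁ z₂ h₂
  calc φ.lintegral μ ≤ (φ.map F + φ.map G).lintegral μ := SimpleFunc.lintegral_mono hsplit le_rfl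
    _ = (φ.map F).lintegral μ + (φ.map G).lintegral μ := SimpleFunc.add_lintegral _ _
    _ ≤ ∫⁻ a, f a ∂μ + ∫⁻ a, g a ∂μ := by
      simp only [← SimpleFunc.lintegral_eq_lintegral]
      exact add_le_add (lintegral_mono hF) (lintegral_mono hG)

theorem lintegral_mul_add_of_monovary (hw : Measurable w) (hw_fin : ∀ᵐ a ∂μ, w a < ∞)
    (h : Monovary f g) :
    ∫⁻ a, w a * (f a + g a) ∂μ = ∫⁻ a, w a * f a ∂μ + ∫⁻ a, w a * g a ∂μ := by
  have hdensity (u : α → ℝ≥0∞) : ∫⁻ a, w a * u a ∂μ = ∫⁻ a, u a ∂μ.withDensity w :=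
    (lintegral_withDensity_eq_lintegral_mul_non_measurable μ hw hw_fin u).symm
  simp only [hdensity, lintegral_add_of_monovary h]

theorem lintegral_mul_eq_top_of_not_ae_lt_top (hw : Measurable w)
    (hw_inf : ¬ ∀ᵐ a ∂μ, w a < ∞) (hf : ∀ a, f a ≠ 0) : ∫⁻ a, w a * f a ∂μ = ∞ := by
  have hS : MeasurableSet {a | w a = ∞} := hw (measurableSet_singleton ∞)
  have hμS : μ {a | w a = ∞} ≠ 0 := by
    simpa [ae_iff, lt_top_iff_ne_top] using hw_inf
  refine top_unique ?_
  calc ∞ = ∫⁻ a, {a | w a = ∞}.indicator (fun _ => ∞) a ∂μ := by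
        rw [lintegral_indicator_const hS, ENNReal.top_mul hμS]
    _ ≤ ∫⁻ a, w a * f a ∂μ := lintegral_mono fun a => by
        by_cases ha : w a = ∞
        · simp [ha, ENNReal.top_mul (hf a)]
        · simp [ha]

theorem lintegral_mul_le_of_le_add_of_monovary (hw : Measurable w) (hk : ∀ a, k a ≤ f a + g a)
    (h : Monovary f g) (hf : ∀ a, f a ≠ 0) :
    ∫⁻ a, w a * k a ∂μ ≤ ∫⁻ a, w a * f a ∂μ + ∫⁻ a, w a * g a ∂μ := by
  by_cases hw_fin : ∀ᵐ a ∂μ, w a < ∞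
  · calc ∫⁻ a, w a * k a ∂μ ≤ ∫⁻ a, w a * (f a + g a) ∂μ := lintegral_mono fun a => by
          gcongr; exact hk a
      _ = _ := lintegral_mul_add_of_monovary hw hw_fin h
  · simp [lintegral_mul_eq_top_of_not_ae_lt_top hw hw_fin hf]

end MeasureTheory

theorem zpow_le_two_pow_natAbs_mul_zpow {R R₁ : ℝ} (hR : 0 < R) (h₁ : R / 2 ≤ R₁)
    (h₂ : R₁ ≤ 2 * R) (m : ℤ) : R₁ ^ m ≤ 2 ^ m.natAbs * R ^ m := by
  have hR₁ : 0 < R₁ := (half_pos hR).trans_le h₁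
  obtain ⟨k, rfl | rfl⟩ := Int.eq_nat_or_neg m
  · calc R₁ ^ (k : ℤ) ≤ (2 * R) ^ k := by
          rw [zpow_natCast]; exact pow_le_pow_left₀ hR₁.le h₂ _
      _ = _ := by rw [mul_pow, zpow_natCast, Int.natAbs_natCast]
  · calc R₁ ^ (-(k : ℤ)) ≤ ((R / 2) ^ k)⁻¹ := by
          rw [zpow_neg, zpow_natCast]
          exact inv_anti₀ (by positivity) (pow_le_pow_left₀ (by positivity) h₁ _)
      _ = _ := by
        rw [div_pow, inv_div, zpow_neg, zpow_natCast, Int.natAbs_neg, Int.natAbs_natCast,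
          div_eq_mul_inv]

theorem exp_neg_sq_div_le_of_sub_le {R R₁ t d : ℝ} (hR : 0 < R) (hR₁ : 0 < R₁)
    (h₂ : R₁ ≤ 3 * R / 2) (hd : 0 ≤ d) (htd : t - R ≤ d) :
    exp (-d ^ 2 / (4 * R₁ ^ 2)) ≤ exp (-(max (t / R - 1) 0) ^ 2 / 9) := by
  have hmax : R * max (t / R - 1) 0 ≤ d := by
    rw [mul_max_of_nonneg _ _ hR.le, mul_sub, mul_div_cancel₀ _ hR.ne', mul_zero, mul_one]
    exact max_le htd hd
  have hsq : (R * max (t / R - 1) 0) ^ 2 ≤ d ^ 2 := by gcongr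
  have hR₁sq : 4 * R₁ ^ 2 ≤ 9 * R ^ 2 := by nlinarith
  rw [exp_le_exp, neg_div, neg_div, neg_le_neg_iff, div_le_div_iff₀ (by norm_num) (by positivity)]
  nlinarith [mul_le_mul_of_nonneg_left hR₁sq (sq_nonneg (max (t / R - 1) 0))]

theorem eventually_mul_exp_shift_le {a b : ℝ} (ha : 0 < a) (hb : 0 < b) :
    ∀ᶠ s in atTop, a * exp (-(max (s - 1) 0) ^ 2 / 9) ≤ b * exp (-s ^ 2 / 16) := by
  have hgap : Tendsto (fun s : ℝ => (s - 1) ^ 2 / 9 - s ^ 2 / 16) atTop atTop := by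
    refine tendsto_atTop_mono' _ ?_ (tendsto_id.atTop_div_const (by norm_num : (0 : ℝ) < 48))
    filter_upwards [eventually_ge_atTop 5] with s hs
    simp only [id]
    nlinarith
  filter_upwards [eventually_ge_atTop 1, hgap.eventually_ge_atTop (log (a / b))] with s hs hlog
  rw [max_eq_left (by linarith)]
  calc a * exp (-(s - 1) ^ 2 / 9) = b * (a / b) * exp (-(s - 1) ^ 2 / 9) := by field_simp
    _ ≤ b * exp ((s - 1) ^ 2 / 9 - s ^ 2 / 16) * exp (-(s - 1) ^ 2 / 9) := by
      gcongr
      rwa [← log_le_iff_le_exp (by positivity)]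
    _ = b * exp (-s ^ 2 / 16) := by rw [mul_assoc, ← exp_add]; ring_nf

theorem exists_le_mul_add_of_eventually_le {f g h : ℝ → ℝ} {M : ℝ} (hf : ∀ s, f s ≤ M)
    (hg_pos : ∀ s, 0 < g s) (hg : AntitoneOn g (Ici 0)) (hh : ∀ s, 0 ≤ h s)
    (hfh : ∀ᶠ s in atTop, f s ≤ h s) : ∃ C > 0, ∀ s ≥ 0, f s ≤ C * g s + h s := by
  obtain ⟨s₀, hs₀⟩ := (hfh.and (eventually_ge_atTop 0)).exists_forall_of_atTop
  have hg₀ := hg_pos s₀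
  have hC : 0 < max M 1 / g s₀ := div_pos (lt_max_of_lt_right one_pos) hg₀
  refine ⟨max M 1 / g s₀, hC, fun s hs => ?_⟩
  rcases le_total s s₀ with hss | hss
  · calc f s ≤ max M 1 := (hf s).trans (le_max_left _ _)
      _ = max M 1 / g s₀ * g s₀ := by field_simp
      _ ≤ max M 1 / g s₀ * g s := by gcongr; exact hg hs (hs₀ s₀ le_rfl).2 hss
      _ ≤ _ := le_add_of_nonneg_right (hh s)
  · exact (hs₀ s hss).1.trans (le_add_of_nonneg_left (mul_pos hC (hg_pos s)).le)

theorem exists_mul_exp_shift_le {a b : ℝ} (ha : 0 < a) (hb : 0 < b) :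
    ∃ C > 0, ∀ s ≥ 0,
      a * exp (-(max (s - 1) 0) ^ 2 / 9) ≤ C * exp (-s ^ 2 / 4) + b * exp (-s ^ 2 / 16) := by
  refine exists_le_mul_add_of_eventually_le (M := a) (fun s => ?_) (fun s => exp_pos _)
    (fun s hs s' _ hss' => ?_) (fun s => by positivity) (eventually_mul_exp_shift_le ha hb)
  · refine mul_le_of_le_one_right ha.le (exp_le_one_iff.2 ?_)
    exact div_nonpos_of_nonpos_of_nonneg (neg_nonpos.2 (sq_nonneg _)) (by norm_num)
  · gcongr

noncomputable def gaussianKernel (n : ℕ) (R t : ℝ) : ℝ :=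
  R ^ ((4 : ℤ) - n) * (4 * π) ^ (-(n : ℝ) / 2) * exp (-t ^ 2 / (4 * R ^ 2))

theorem gaussianKernel_pos (n : ℕ) {R : ℝ} (hR : 0 < R) (t : ℝ) : 0 < gaussianKernel n R t := by
  unfold gaussianKernel
  positivity

theorem gaussianKernel_antitoneOn (n : ℕ) {R : ℝ} (hR : 0 ≤ R) :
    AntitoneOn (gaussianKernel n R) (Ici 0) := fun t ht t' _ htt' => by
  unfold gaussianKernel
  gcongr

theorem exists_gaussianKernel_le (n : ℕ) {ε : ℝ} (hε : 0 < ε) :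
    ∃ C > 0, ∀ {R R₁ t d : ℝ}, 0 < R → R / 2 ≤ R₁ → R₁ ≤ 3 * R / 2 → 0 ≤ t → 0 ≤ d →
      t - R ≤ d →
        gaussianKernel n R₁ d ≤ C * gaussianKernel n R t + ε * gaussianKernel n (2 * R) t := by
  set m : ℤ := 4 - n
  obtain ⟨C, hC, hkey⟩ := exists_mul_exp_shift_le (a := 2 ^ m.natAbs) (b := ε * 2 ^ m)
    (by positivity) (by positivity)
  refine ⟨C, hC, fun {R R₁ t d} hR h₁ h₂ ht hd htd => ?_⟩
  have hR₁ : 0 < R₁ := (half_pos hR).trans_le h₁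
  have e₁ : -t ^ 2 / (4 * R ^ 2) = -(t / R) ^ 2 / 4 := by field_simp
  have e₂ : -t ^ 2 / (4 * (2 * R) ^ 2) = -(t / R) ^ 2 / 16 := by field_simp; ring
  set A := (4 * π) ^ (-(n : ℝ) / 2)
  calc gaussianKernel n R₁ d = R₁ ^ m * A * exp (-d ^ 2 / (4 * R₁ ^ 2)) := rfl
    _ ≤ 2 ^ m.natAbs * R ^ m * A * exp (-(max (t / R - 1) 0) ^ 2 / 9) := by
      gcongr ?_ * A * ?_
      · exact zpow_le_two_pow_natAbs_mul_zpow hR h₁ (by linarith) m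
      · exact exp_neg_sq_div_le_of_sub_le hR hR₁ h₂ hd htd
    _ = R ^ m * A * (2 ^ m.natAbs * exp (-(max (t / R - 1) 0) ^ 2 / 9)) := by ring
    _ ≤ R ^ m * A * (C * exp (-(t / R) ^ 2 / 4) + ε * 2 ^ m * exp (-(t / R) ^ 2 / 16)) := by
      gcongr
      exact hkey _ (by positivity)
    _ = C * gaussianKernel n R t + ε * gaussianKernel n (2 * R) t := by
      simp only [gaussianKernel, e₁, e₂, mul_zpow]
      ring

section Energy

variable {X : Type} [PseudoMetricSpace X]

theorem monovary_ofReal_mul_gaussianKernel (n : ℕ) {c c' R R' : ℝ} (hc : 0 ≤ c) (hc' : 0 ≤ c')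
    (hR : 0 ≤ R) (hR' : 0 ≤ R') (x : X) :
    Monovary (fun y => ENNReal.ofReal (c * gaussianKernel n R (dist x y)))
      (fun y => ENNReal.ofReal (c' * gaussianKernel n R' (dist x y))) := fun y z hyz => by
  have hzy : dist x z < dist x y := by
    by_contra! h
    refine hyz.not_ge (ENNReal.ofReal_le_ofReal ?_)
    exact mul_le_mul_of_nonneg_left
      (gaussianKernel_antitoneOn n hR' dist_nonneg dist_nonneg h) hc'
  exact ENNReal.ofReal_le_ofReal <| mul_le_mul_of_nonneg_left
    (gaussianKernel_antitoneOn n hR dist_nonneg dist_nonneg hzy.le) hc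

variable [MeasurableSpace X]

theorem ofReal_mul_weightedEnergy (n : ℕ) (μ : Measure X) (w : X → ℝ≥0∞) {c R : ℝ}
    (hc : 0 ≤ c) (hR : 0 ≤ R) (x : X) :
    ENNReal.ofReal c * weightedEnergy n μ w R x =
      ∫⁻ y, w y * ENNReal.ofReal (c * gaussianKernel n R (dist x y)) ∂μ := by
  rw [weightedEnergy, ← mul_assoc, ← ENNReal.ofReal_mul hc,
    ← lintegral_const_mul' _ _ ENNReal.ofReal_ne_top]
  congr 1 with y
  rw [mul_left_comm, ← ENNReal.ofReal_mul (by positivity), gaussianKernel, mul_assoc c]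

theorem weightedEnergy_eq_lintegral (n : ℕ) (μ : Measure X) (w : X → ℝ≥0∞) {R : ℝ}
    (hR : 0 ≤ R) (x : X) :
    weightedEnergy n μ w R x = ∫⁻ y, w y * ENNReal.ofReal (gaussianKernel n R (dist x y)) ∂μ := by
  simpa using ofReal_mul_weightedEnergy n μ w zero_le_one hR x

end Energy

theorem weightedEnergy_comparison_general (n : ℕ) :
    ∀ ε > (0 : ℝ), ∃ C > (0 : ℝ),
      ∀ (X : Type) (_ : PseudoMetricSpace X) (_ : MeasurableSpace X)
        (μ : Measure X) (w : X → ENNReal), Measurable w →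
        ∀ (x x₁ : X) (R R₁ : ℝ),
          0 < R → R / 2 ≤ R₁ → R₁ ≤ 3 * R / 2 → dist x x₁ ≤ R →
          weightedEnergy n μ w R₁ x ≤
            ENNReal.ofReal C * weightedEnergy n μ w R x₁ +
              ENNReal.ofReal ε * weightedEnergy n μ w (2 * R) x₁ := by
  intro ε hε
  obtain ⟨C, hC, hK⟩ := exists_gaussianKernel_le n hε
  refine ⟨C, hC, fun X _ _ μ w hw x x₁ R R₁ hR h₁ h₂ hx => ?_⟩
  have hR₁ : 0 < R₁ := (half_pos hR).trans_le h₁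
  rw [weightedEnergy_eq_lintegral n μ w hR₁.le, ofReal_mul_weightedEnergy n μ w hC.le hR.le,
    ofReal_mul_weightedEnergy n μ w hε.le (by positivity)]
  refine lintegral_mul_le_of_le_add_of_monovary hw (fun y => ?_)
    (monovary_ofReal_mul_gaussianKernel n hC.le hε.le hR.le (by positivity) x₁)
    (fun y => (ENNReal.ofReal_pos.2 (mul_pos hC (gaussianKernel_pos n hR _))).ne')
  have htriangle : dist x₁ y - R ≤ dist x y := by
    linarith [dist_triangle x₁ x y, dist_comm x x₁]
  rw [← ENNReal.ofReal_add (mul_pos hC (gaussianKernel_pos n hR _)).le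
    (mul_pos hε (gaussianKernel_pos n (by positivity) _)).le]
  exact ENNReal.ofReal_le_ofReal (hK hR h₁ h₂ dist_nonneg dist_nonneg htriangle)

/-- Gaussian comparison of weighted energies: for `n ≥ 4` and every `ε > 0` there is a
constant `C = C(ε, n) > 0` such that for any pseudometric space `X` with a measure `μ`
and any measurable density `w : X → [0,∞]`, whenever `R > 0`, `R/2 ≤ R₁ ≤ 3R/2`, and
`d(x, x₁) ≤ R`, one has `Φ(R₁, x) ≤ C Φ(R, x₁) + ε Φ(2R, x₁)`. -/
theorem weightedEnergy_comparison (n : ℕ) (hn : 4 ≤ n) :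
    ∀ ε > (0 : ℝ), ∃ C > (0 : ℝ),
      ∀ (X : Type) (_ : PseudoMetricSpace X) (_ : MeasurableSpace X)
        (μ : Measure X) (w : X → ENNReal), Measurable w →
        ∀ (x x₁ : X) (R R₁ : ℝ),
          0 < R → R / 2 ≤ R₁ → R₁ ≤ 3 * R / 2 → dist x x₁ ≤ R →
          weightedEnergy n μ w R₁ x ≤
            ENNReal.ofReal C * weightedEnergy n μ w R x₁ +
              ENNReal.ofReal ε * weightedEnergy n μ w (2 * R) x₁ :=
  weightedEnergy_comparison_general n
end
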